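/- Finite-state selectors are compositional: for any finite alphabet Σ and any deterministic finite automata A and B over Σ, there exists a deterministic finite automaton C over Σ such that for every finite or infinite sequence w over Σ, C[w] = B[A[w]]. -/

import Mathlib

open Filter
open scoped Classical

/-- The word selected from `w` by the strategy `S ⊆ Σ*`: the symbols `w_j` (in order)
such that the prefix `w_1 … w_(j-1)` belongs to `S`. -/
noncomputable def selectWord {Γ : Type*} (S : Set (List Γ)) (w : List Γ) : List Γ :=
  (List.finRange w.length).filterMap fun (j : Fin w.length) =>
    if w.take (j : ℕ) ∈ S then some (w.get j) else none

/-- `D[w]`: the word selected from `w` by the DFA `D` (started in its start state): the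
symbols of `w` read from an accepting state. -/
noncomputable def dfaSelectWord {Γ σ : Type*} (D : DFA Γ σ) (w : List Γ) : List Γ :=
  selectWord {u | D.eval u ∈ D.accept} w

/-! `C` runs `A` and `B` side by side, feeding a letter to `B` exactly when `A` selects it.
After reading `w` it is therefore in state `(A.eval w, B.eval A[w])`, so it is accepting exactly
when `A` selects the next letter and `B`, having read `A[w]`, selects it too. -/

section Selection

variable {Γ : Type*}

theorem selectWord_eq_filterMap_zip (S : Set (List Γ)) (w : List Γ) :
    selectWord S w = ((List.range w.length).zip w).filterMap
      fun p => if w.take p.1 ∈ S then some p.2 else none := by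
  have hrange : (List.finRange w.length).map Fin.val = List.range w.length :=
    List.ext_getElem (by simp) (by simp)
  have hzip : (List.range w.length).zip w
      = (List.finRange w.length).map fun (j : Fin w.length) => ((j : ℕ), w.get j) := by
    rw [← hrange, ← List.zip_map', List.map_get_finRange]
  rw [hzip, List.filterMap_map]
  rfl

theorem selectWord_append_singleton (S : Set (List Γ)) (w : List Γ) (a : Γ) :
    selectWord S (w ++ [a]) = selectWord S w ++ if w ∈ S then [a] else [] := by
  simp only [selectWord_eq_filterMap_zip, List.length_append, List.length_singleton,
    List.range_succ]
  rw [List.zip_append (by simp), List.filterMap_append]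
  congr 1
  · refine List.filterMap_congr fun p hp => ?_
    have hp_lt : p.1 < w.length := List.mem_range.mp (List.of_mem_zip hp).1
    rw [List.take_append_of_le_length hp_lt.le]
  · by_cases h : w ∈ S <;> simp [h]

variable {σ : Type*} (D : DFA Γ σ)

theorem dfaSelectWord_append_singleton (w : List Γ) (a : Γ) :
    dfaSelectWord D (w ++ [a]) =
      dfaSelectWord D w ++ if D.eval w ∈ D.accept then [a] else [] :=
  selectWord_append_singleton _ w a

end Selection

namespace DFA

variable {Γ σ₁ σ₂ : Type*} (A : DFA Γ σ₁) (B : DFA Γ σ₂)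

noncomputable def selectorComp : DFA Γ (σ₁ × σ₂) where
  step p a := (A.step p.1 a, if p.1 ∈ A.accept then B.step p.2 a else p.2)
  start := (A.start, B.start)
  accept := {p | p.1 ∈ A.accept ∧ p.2 ∈ B.accept}

theorem selectorComp_eval (w : List Γ) :
    (selectorComp A B).eval w = (A.eval w, B.eval (dfaSelectWord A w)) := by
  induction w using List.reverseRecOn with
  | nil => rfl
  | append_singleton w a ih =>
    rw [eval_append_singleton, ih, eval_append_singleton, dfaSelectWord_append_singleton]
    by_cases h : A.eval w ∈ A.accept <;> simp [selectorComp, h, eval_append_singleton]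

theorem dfaSelectWord_selectorComp (w : List Γ) :
    dfaSelectWord (selectorComp A B) w = dfaSelectWord B (dfaSelectWord A w) := by
  induction w using List.reverseRecOn with
  | nil => rfl
  | append_singleton w a ih =>
    rw [dfaSelectWord_append_singleton, ih, selectorComp_eval, dfaSelectWord_append_singleton A]
    by_cases h : A.eval w ∈ A.accept
    · simp [selectorComp, h, dfaSelectWord_append_singleton]
    · simp [selectorComp, h]

end DFA

theorem finiteState_selectors_compositional_general
    (Γ : Type) (σ₁ σ₂ : Type) [Fintype σ₁] [Fintype σ₂]
    (A : DFA Γ σ₁) (B : DFA Γ σ₂) :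
    ∃ (τ : Type) (_ : Fintype τ) (C : DFA Γ τ),
      ∀ w : List Γ, dfaSelectWord C w = dfaSelectWord B (dfaSelectWord A w) :=
  ⟨σ₁ × σ₂, inferInstance, A.selectorComp B, A.dfaSelectWord_selectorComp B⟩

/-- Finite-state selectors are compositional: for DFAs `A` and `B` over a finite alphabet `Γ`
there is a DFA `C` such that `C[w] = B[A[w]]` for every word `w` (and hence for every finite
or infinite sequence, since selection is determined by its action on all finite prefixes). -/
theorem finiteState_selectors_compositional
    (Γ : Type) [Fintype Γ] (σ₁ σ₂ : Type) [Fintype σ₁] [Fintype σ₂]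
    (A : DFA Γ σ₁) (B : DFA Γ σ₂) :
    ∃ (τ : Type) (_ : Fintype τ) (C : DFA Γ τ),
      ∀ w : List Γ, dfaSelectWord C w = dfaSelectWord B (dfaSelectWord A w) :=
  finiteState_selectors_compositional_general Γ σ₁ σ₂ A B
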